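/- arXiv:2504.09660 — 6 statements merged into one kernel-verified Lean document; each statement's English description precedes it below -/
import Mathlib

section
/- Fix z ∈ ℝ with f(z) > 0, and define Ã(z) = (∫∫ x·y·∂₃p(x,y,z) dx dy)/f(z), B̃(z) = (∫∫ x·y²·∂₃²p(x,y,z) dx dy)/f(z), C̃(z) = (∫∫ y·∂₃p(x,y,z) dx dy)/f(z), D̃(z) = (∫∫ y²·∂₃²p(x,y,z) dx dy)/f(z). Suppose that, as τ → 0, the functions N(τ) := ∫∫ x·p(x,y,z−τ·y) dx dy and D(τ) := ∫∫ p(x,y,z−τ·y) dx dy satisfy N(τ) = f(z)·m(z) − τ·f(z)·Ã(z) + (τ²/2)·f(z)·B̃(z) + o(τ²) and D(τ) = f(z) − τ·f(z)·C̃(z) + (τ²/2)·f(z)·D̃(z) + o(τ²) (little-o along 𝓝 0). Then, as τ → 0, N(τ)/D(τ) = m(z) + τ·L + (τ²/2)·F + o(τ²), where L = C̃(z)·m(z) − Ã(z) and F = B̃(z) − 2·Ã(z)·C̃(z) + (2·C̃(z)² − D̃(z))·m(z). -/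
/-!
Write `N(τ) = Nₚ(τ) + o(τ²)` and `D(τ) = Dₚ(τ) + o(τ²)` with quadratic polynomials `Nₚ`, `Dₚ`,
and let `Q` be the quadratic whose coefficients solve the triangular system obtained by matching
`Nₚ` with `Q · Dₚ` up to order two. Then `N - Q · D` is `o(τ²)`, since `Nₚ - Q · Dₚ` only has terms
of order three and four and `Q` is bounded near `0`. As `D(τ) → D(0) = f > 0`, dividing by `D`
preserves `o(τ²)`, so `N / D = Q + o(τ²)`; the coefficients of `Q` are `m`, `L` and `F / 2`.
-/

open Asymptotics Filter Topology

section

variable {𝕜 : Type*} [NormedField 𝕜]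

theorem Asymptotics.IsLittleO.div_sub_of_sub_mul {α : Type*} {l : Filter α} {N D Q g : α → 𝕜}
    {d : 𝕜} (hd : d ≠ 0) (hD : Tendsto D l (𝓝 d))
    (h : (fun x => N x - Q x * D x) =o[l] g) :
    (fun x => N x / D x - Q x) =o[l] g := by
  have hDinv : (fun x => (D x)⁻¹) =O[l] fun _ => (1 : 𝕜) := (hD.inv₀ hd).isBigO_one 𝕜
  refine (h.mul_isBigO hDinv).congr' ?_ (.of_eq <| funext fun _ => mul_one _)
  filter_upwards [hD.eventually_ne hd] with x hx
  field_simp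

theorem isLittleO_quadratic_mul_quadratic_sub (q₀ q₁ q₂ d₀ d₁ d₂ : 𝕜) :
    (fun τ : 𝕜 => (q₀ + q₁ * τ + q₂ * τ ^ 2) * (d₀ + d₁ * τ + d₂ * τ ^ 2) -
        (q₀ * d₀ + (q₀ * d₁ + q₁ * d₀) * τ + (q₀ * d₂ + q₁ * d₁ + q₂ * d₀) * τ ^ 2))
      =o[𝓝 0] fun τ => τ ^ 2 := by
  have hcoeff : (fun τ : 𝕜 => q₁ * d₂ + q₂ * d₁ + q₂ * d₂ * τ) =O[𝓝 0] fun _ => (1 : 𝕜) :=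
    (Continuous.tendsto (by fun_prop) 0).isBigO_one 𝕜
  refine ((isLittleO_pow_pow (𝕜 := 𝕜) (by norm_num : 2 < 3)).mul_isBigO hcoeff).congr
    (fun τ => by ring) (fun τ => mul_one _)

theorem tendsto_of_isLittleO_sub_quadratic {D : 𝕜 → 𝕜} {d₀ d₁ d₂ : 𝕜}
    (hD : (fun τ => D τ - (d₀ + d₁ * τ + d₂ * τ ^ 2)) =o[𝓝 0] fun τ => τ ^ 2) :
    Tendsto D (𝓝 0) (𝓝 d₀) := by
  have hrem : Tendsto (fun τ => D τ - (d₀ + d₁ * τ + d₂ * τ ^ 2)) (𝓝 0) (𝓝 0) :=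
    hD.isBigO.trans_tendsto (by simpa using (continuous_pow 2).tendsto (0 : 𝕜))
  have hpoly : Tendsto (fun τ : 𝕜 => d₀ + d₁ * τ + d₂ * τ ^ 2) (𝓝 0) (𝓝 d₀) := by
    simpa using (Continuous.tendsto (by fun_prop) 0 :
      Tendsto (fun τ : 𝕜 => d₀ + d₁ * τ + d₂ * τ ^ 2) (𝓝 0) _)
  simpa using hrem.add hpoly

theorem isLittleO_div_sub_quadratic {N D : 𝕜 → 𝕜} {n₀ n₁ n₂ d₀ d₁ d₂ q₀ q₁ q₂ : 𝕜}
    (hd₀ : d₀ ≠ 0)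
    (hN : (fun τ => N τ - (n₀ + n₁ * τ + n₂ * τ ^ 2)) =o[𝓝 0] fun τ => τ ^ 2)
    (hD : (fun τ => D τ - (d₀ + d₁ * τ + d₂ * τ ^ 2)) =o[𝓝 0] fun τ => τ ^ 2)
    (h₀ : n₀ = q₀ * d₀) (h₁ : n₁ = q₀ * d₁ + q₁ * d₀) (h₂ : n₂ = q₀ * d₂ + q₁ * d₁ + q₂ * d₀) :
    (fun τ => N τ / D τ - (q₀ + q₁ * τ + q₂ * τ ^ 2)) =o[𝓝 0] fun τ => τ ^ 2 := by
  have hQ : (fun τ : 𝕜 => q₀ + q₁ * τ + q₂ * τ ^ 2) =O[𝓝 0] fun _ => (1 : 𝕜) :=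
    (Continuous.tendsto (by fun_prop) 0).isBigO_one 𝕜
  have hQD : (fun τ => (q₀ + q₁ * τ + q₂ * τ ^ 2) * (D τ - (d₀ + d₁ * τ + d₂ * τ ^ 2)))
      =o[𝓝 0] fun τ => τ ^ 2 :=
    (hQ.mul_isLittleO hD).congr_right fun _ => one_mul _
  have hmain : (fun τ => N τ - (q₀ + q₁ * τ + q₂ * τ ^ 2) * D τ) =o[𝓝 0] fun τ => τ ^ 2 := by
    refine ((hN.sub hQD).sub (isLittleO_quadratic_mul_quadratic_sub q₀ q₁ q₂ d₀ d₁ d₂)).congr_left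
      fun τ => ?_
    subst h₀ h₁ h₂
    ring
  exact hmain.div_sub_of_sub_mul hd₀ (tendsto_of_isLittleO_sub_quadratic hD)

end

theorem conditional_expectation_second_order_approx_general
    (f m A B C D' : ℝ)
    (hfpos : 0 < f)
    (N D : ℝ → ℝ)
    (hNexp : (fun τ : ℝ => N τ - (f * m - τ * (f * A) + τ ^ 2 / 2 * (f * B)))
      =o[𝓝 (0 : ℝ)] fun τ => τ ^ 2)
    (hDexp : (fun τ : ℝ => D τ - (f - τ * (f * C) + τ ^ 2 / 2 * (f * D')))
      =o[𝓝 (0 : ℝ)] fun τ => τ ^ 2) :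
    (fun τ : ℝ => N τ / D τ -
        (m + τ * (C * m - A) +
          τ ^ 2 / 2 * (B - 2 * A * C + (2 * C ^ 2 - D') * m)))
      =o[𝓝 (0 : ℝ)] fun τ => τ ^ 2 := by
  refine (isLittleO_div_sub_quadratic (n₁ := -(f * A)) (n₂ := f * B / 2)
    (d₁ := -(f * C)) (d₂ := f * D' / 2) (q₁ := C * m - A)
    (q₂ := (B - 2 * A * C + (2 * C ^ 2 - D') * m) / 2) hfpos.ne'
    (hNexp.congr_left fun τ => by ring) (hDexp.congr_left fun τ => by ring)
    (mul_comm f m) (by ring) (by ring)).congr_left fun τ => by ring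

/-- Proposition 1 (second-order approximation of the conditional expectation), at the level
of densities: given second-order expansions of the numerator `N(τ) = ∫∫ x·p(x,y,z−τy)` and
the denominator `D(τ) = ∫∫ p(x,y,z−τy)` of the conditional-expectation ratio, the ratio
expands as `m(z) + τ·L + (τ²/2)·F + o(τ²)` with `L = C̃·m − Ã` and
`F = B̃ − 2·Ã·C̃ + (2·C̃² − D̃)·m`. Here `p₁`, `p₂` are the first and second partial
derivatives of `p` in its third argument. -/
theorem conditional_expectation_second_order_approx (z : ℝ) (p p₁ p₂ : ℝ × ℝ × ℝ → ℝ)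
    (hp : Measurable p) (hp_nonneg : ∀ q, 0 ≤ p q)
    (hp₁ : Measurable p₁) (hp₂ : Measurable p₂)
    (hderiv1 : ∀ x y s : ℝ, HasDerivAt (fun t => p (x, y, t)) (p₁ (x, y, s)) s)
    (hderiv2 : ∀ x y s : ℝ, HasDerivAt (fun t => p₁ (x, y, t)) (p₂ (x, y, s)) s)
    (f m A B C D' : ℝ)
    (hf : f = ∫ q : ℝ × ℝ, p (q.1, q.2, z))
    (hfpos : 0 < f)
    (hm : m = (∫ q : ℝ × ℝ, q.1 * p (q.1, q.2, z)) / f)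
    (hA : A = (∫ q : ℝ × ℝ, q.1 * q.2 * p₁ (q.1, q.2, z)) / f)
    (hB : B = (∫ q : ℝ × ℝ, q.1 * q.2 ^ 2 * p₂ (q.1, q.2, z)) / f)
    (hC : C = (∫ q : ℝ × ℝ, q.2 * p₁ (q.1, q.2, z)) / f)
    (hD' : D' = (∫ q : ℝ × ℝ, q.2 ^ 2 * p₂ (q.1, q.2, z)) / f)
    (N D : ℝ → ℝ)
    (hN : ∀ τ : ℝ, N τ = ∫ q : ℝ × ℝ, q.1 * p (q.1, q.2, z - τ * q.2))
    (hD : ∀ τ : ℝ, D τ = ∫ q : ℝ × ℝ, p (q.1, q.2, z - τ * q.2))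
    (hNexp : (fun τ : ℝ => N τ - (f * m - τ * (f * A) + τ ^ 2 / 2 * (f * B)))
      =o[𝓝 (0 : ℝ)] fun τ => τ ^ 2)
    (hDexp : (fun τ : ℝ => D τ - (f - τ * (f * C) + τ ^ 2 / 2 * (f * D')))
      =o[𝓝 (0 : ℝ)] fun τ => τ ^ 2) :
    (fun τ : ℝ => N τ / D τ -
        (m + τ * (C * m - A) +
          τ ^ 2 / 2 * (B - 2 * A * C + (2 * C ^ 2 - D') * m)))
      =o[𝓝 (0 : ℝ)] fun τ => τ ^ 2 :=
  conditional_expectation_second_order_approx_general f m A B C D' hfpos N D hNexp hDexp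
end

section
/- Fix z ∈ ℝ and assume f(z) > 0. Define f(z') = ∫∫ p(x,y,z') dx dy, w(z') = ∫∫ x·p(x,y,z') dx dy, r(z') = ∫∫ y·p(x,y,z') dx dy, s(z') = ∫∫ x·y·p(x,y,z') dx dy. Assume the differentiation-under-the-integral hypotheses at z: f has derivative f'(z) := ∫∫ ∂₃p(x,y,z) dx dy at z, w has derivative ∫∫ x·∂₃p(x,y,z) dx dy at z, r has derivative ∫∫ y·∂₃p(x,y,z) dx dy at z, and s has derivative ∫∫ x·y·∂₃p(x,y,z) dx dy at z. Let m := w/f, Ḡ := r/f, Cov := s/f − m·Ḡ, Ã(z) := (∫∫ x·y·∂₃p(x,y,z) dx dy)/f(z), C̃(z) := (∫∫ y·∂₃p(x,y,z) dx dy)/f(z). Then the functions m, Ḡ, Cov are differentiable at z and C̃(z)·m(z) − Ã(z) = −(f'(z)/f(z))·Cov(z) − Cov'(z) − Ḡ(z)·m'(z). -/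
open MeasureTheory

/-- Covariance form of the first-order correction term `Lᵢ(z,a)` of Proposition 1:
`C̃(z)·m(z) − Ã(z) = −(f'(z)/f(z))·Cov(z) − Cov'(z) − Ḡ(z)·m'(z)`, where `m = w/f`,
`Ḡ = r/f`, `Cov = s/f − m·Ḡ`, under differentiation-under-the-integral hypotheses at `z`.
`p₁` is the partial derivative of `p` in its third argument. -/
theorem first_order_correction_covariance_form (z : ℝ) (p p₁ : ℝ × ℝ × ℝ → ℝ)
    (hp : Measurable p) (hp_nonneg : ∀ q, 0 ≤ p q) (hp₁ : Measurable p₁)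
    (hderiv : ∀ x y s : ℝ, HasDerivAt (fun t => p (x, y, t)) (p₁ (x, y, s)) s)
    (f w r s : ℝ → ℝ)
    (hf : ∀ z' : ℝ, f z' = ∫ q : ℝ × ℝ, p (q.1, q.2, z'))
    (hw : ∀ z' : ℝ, w z' = ∫ q : ℝ × ℝ, q.1 * p (q.1, q.2, z'))
    (hr : ∀ z' : ℝ, r z' = ∫ q : ℝ × ℝ, q.2 * p (q.1, q.2, z'))
    (hs : ∀ z' : ℝ, s z' = ∫ q : ℝ × ℝ, q.1 * q.2 * p (q.1, q.2, z'))
    (hfpos : 0 < f z)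
    (hf' : HasDerivAt f (∫ q : ℝ × ℝ, p₁ (q.1, q.2, z)) z)
    (hw' : HasDerivAt w (∫ q : ℝ × ℝ, q.1 * p₁ (q.1, q.2, z)) z)
    (hr' : HasDerivAt r (∫ q : ℝ × ℝ, q.2 * p₁ (q.1, q.2, z)) z)
    (hs' : HasDerivAt s (∫ q : ℝ × ℝ, q.1 * q.2 * p₁ (q.1, q.2, z)) z) :
    DifferentiableAt ℝ (fun z' => w z' / f z') z ∧
    DifferentiableAt ℝ (fun z' => r z' / f z') z ∧
    DifferentiableAt ℝ (fun z' => s z' / f z' - (w z' / f z') * (r z' / f z')) z ∧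
    ((∫ q : ℝ × ℝ, q.2 * p₁ (q.1, q.2, z)) / f z) * (w z / f z) -
        (∫ q : ℝ × ℝ, q.1 * q.2 * p₁ (q.1, q.2, z)) / f z =
      -(((∫ q : ℝ × ℝ, p₁ (q.1, q.2, z)) / f z) *
          (s z / f z - (w z / f z) * (r z / f z))) -
        deriv (fun z' => s z' / f z' - (w z' / f z') * (r z' / f z')) z -
        (r z / f z) * deriv (fun z' => w z' / f z') z := by
  have hF : f z ≠ 0 := ne_of_gt hfpos
  have hm : HasDerivAt (fun z' => w z' / f z')
      (((∫ q : ℝ × ℝ, q.1 * p₁ (q.1, q.2, z)) * f z -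
        w z * (∫ q : ℝ × ℝ, p₁ (q.1, q.2, z))) / f z ^ 2) z := hw'.div hf' hF
  have hg : HasDerivAt (fun z' => r z' / f z')
      (((∫ q : ℝ × ℝ, q.2 * p₁ (q.1, q.2, z)) * f z -
        r z * (∫ q : ℝ × ℝ, p₁ (q.1, q.2, z))) / f z ^ 2) z := hr'.div hf' hF
  have hsf : HasDerivAt (fun z' => s z' / f z')
      (((∫ q : ℝ × ℝ, q.1 * q.2 * p₁ (q.1, q.2, z)) * f z -
        s z * (∫ q : ℝ × ℝ, p₁ (q.1, q.2, z))) / f z ^ 2) z := hs'.div hf' hF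
  have hcov : HasDerivAt (fun z' => s z' / f z' - (w z' / f z') * (r z' / f z')) _ z :=
    hsf.sub (hm.mul hg)
  refine ⟨hm.differentiableAt, hg.differentiableAt, hcov.differentiableAt, ?_⟩
  rw [hcov.deriv, hm.deriv]
  field_simp
  ring
end

section
/- Fix z ∈ ℝ and suppose there is an open neighborhood U of z on which f > 0, where f(z') = ∫∫ p(x,y,z') dx dy, w(z') = ∫∫ x·p(x,y,z') dx dy, r₂(z') = ∫∫ y²·p(x,y,z') dx dy, s₂(z') = ∫∫ x·y²·p(x,y,z') dx dy. Assume first-order differentiation under the integral sign holds at every z' ∈ U (each of f, w, r₂, s₂ has derivative at z' given by the corresponding integral of ∂₃p with the same weight), and second-order differentiation under the integral sign holds at z (each of these derivative functions has derivative at z given by the corresponding integral of ∂₃²p with the same weight). Let m := w/f, M₂ := r₂/f, K := s₂/f − m·M₂, ℓ₁ := f'(z)/f(z), ℓ₂ := f''(z)/f(z) − (f'(z)/f(z))², where f'(z) = ∫∫ ∂₃p(x,y,z) dx dy and f''(z) = ∫∫ ∂₃²p(x,y,z) dx dy, and set B̃(z) := (∫∫ x·y²·∂₃²p(x,y,z)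 dx dy)/f(z), D̃(z) := (∫∫ y²·∂₃²p(x,y,z) dx dy)/f(z). Then m, M₂, K are twice differentiable at z and B̃(z) − D̃(z)·m(z) = (ℓ₂ + ℓ₁²)·K(z) + 2·ℓ₁·(K'(z) + M₂(z)·m'(z)) + K''(z) + 2·M₂'(z)·m'(z) + M₂(z)·m''(z). -/
open MeasureTheory

private lemma quot_pkg {U : Set ℝ} {z : ℝ} (hz : z ∈ U)
    {a b a' b' : ℝ → ℝ} {A B : ℝ}
    (hapos : ∀ x ∈ U, 0 < a x)
    (ha : ∀ x ∈ U, HasDerivAt a (a' x) x)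
    (hb : ∀ x ∈ U, HasDerivAt b (b' x) x)
    (hA : HasDerivAt a' A z) (hB : HasDerivAt b' B z) :
    (∀ x ∈ U, HasDerivAt (fun t => b t / a t)
        ((b' x * a x - b x * a' x) / (a x) ^ 2) x) ∧
    HasDerivAt (fun x => (b' x * a x - b x * a' x) / (a x) ^ 2)
      ((B * a z - b z * A) / (a z) ^ 2
        - 2 * a' z * (b' z * a z - b z * a' z) / (a z) ^ 3) z := by
  constructor
  · intro x hx
    exact (hb x hx).div (ha x hx) (hapos x hx).ne'
  · have haz := ha z hz
    have hbz := hb z hz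
    have hnum : HasDerivAt (fun x => b' x * a x - b x * a' x)
        (B * a z + b' z * a' z - (b' z * a' z + b z * A)) z :=
      (hB.mul haz).sub (hbz.mul hA)
    have hden : HasDerivAt (fun x => (a x) ^ 2) (2 * a z ^ 1 * a' z) z := haz.pow 2
    have haz0 : a z ≠ 0 := (hapos z hz).ne'
    have hne : (a z) ^ 2 ≠ 0 := pow_ne_zero _ haz0
    have h := hnum.div hden hne
    convert h using 1
    · rfl
    · rfl
    · rfl
    field_simp
    ring

/-- Covariance form of the main part `B̃ − D̃·m` of the second-order correction term
`Fᵢ(z,a)` of Proposition 1, under first-order differentiation under the integral sign on a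
neighborhood `U` of `z` and second-order differentiation under the integral sign at `z`.
`p₁`, `p₂` are the first and second partial derivatives of `p` in its third argument;
`m(z) = E[X|Z=z]`, `M₂(z) = E[W²|Z=z]`, `K(z) = Cov[X,W²|Z=z]`. -/
theorem second_order_main_term_covariance_form (z : ℝ) (p p₁ p₂ : ℝ × ℝ × ℝ → ℝ)
    (hp : Measurable p) (hp_nonneg : ∀ q, 0 ≤ p q)
    (hp₁ : Measurable p₁) (hp₂ : Measurable p₂)
    (hderiv1 : ∀ x y s : ℝ, HasDerivAt (fun t => p (x, y, t)) (p₁ (x, y, s)) s)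
    (hderiv2 : ∀ x y s : ℝ, HasDerivAt (fun t => p₁ (x, y, t)) (p₂ (x, y, s)) s)
    (U : Set ℝ) (hU : IsOpen U) (hzU : z ∈ U)
    (f w r₂ s₂ : ℝ → ℝ)
    (hf : ∀ z' : ℝ, f z' = ∫ q : ℝ × ℝ, p (q.1, q.2, z'))
    (hw : ∀ z' : ℝ, w z' = ∫ q : ℝ × ℝ, q.1 * p (q.1, q.2, z'))
    (hr₂ : ∀ z' : ℝ, r₂ z' = ∫ q : ℝ × ℝ, q.2 ^ 2 * p (q.1, q.2, z'))
    (hs₂ : ∀ z' : ℝ, s₂ z' = ∫ q : ℝ × ℝ, q.1 * q.2 ^ 2 * p (q.1, q.2, z'))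
    (hfpos : ∀ z' ∈ U, 0 < f z')
    -- first-order differentiation under the integral sign on U
    (hf' : ∀ z' ∈ U, HasDerivAt f (∫ q : ℝ × ℝ, p₁ (q.1, q.2, z')) z')
    (hw' : ∀ z' ∈ U, HasDerivAt w (∫ q : ℝ × ℝ, q.1 * p₁ (q.1, q.2, z')) z')
    (hr₂' : ∀ z' ∈ U, HasDerivAt r₂ (∫ q : ℝ × ℝ, q.2 ^ 2 * p₁ (q.1, q.2, z')) z')
    (hs₂' : ∀ z' ∈ U, HasDerivAt s₂ (∫ q : ℝ × ℝ, q.1 * q.2 ^ 2 * p₁ (q.1, q.2, z')) z')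
    -- second-order differentiation under the integral sign at z
    (hf'' : HasDerivAt (fun z' => ∫ q : ℝ × ℝ, p₁ (q.1, q.2, z'))
      (∫ q : ℝ × ℝ, p₂ (q.1, q.2, z)) z)
    (hw'' : HasDerivAt (fun z' => ∫ q : ℝ × ℝ, q.1 * p₁ (q.1, q.2, z'))
      (∫ q : ℝ × ℝ, q.1 * p₂ (q.1, q.2, z)) z)
    (hr₂'' : HasDerivAt (fun z' => ∫ q : ℝ × ℝ, q.2 ^ 2 * p₁ (q.1, q.2, z'))
      (∫ q : ℝ × ℝ, q.2 ^ 2 * p₂ (q.1, q.2, z)) z)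
    (hs₂'' : HasDerivAt (fun z' => ∫ q : ℝ × ℝ, q.1 * q.2 ^ 2 * p₁ (q.1, q.2, z'))
      (∫ q : ℝ × ℝ, q.1 * q.2 ^ 2 * p₂ (q.1, q.2, z)) z)
    (m M₂ K : ℝ → ℝ)
    (hm : ∀ z' : ℝ, m z' = w z' / f z')
    (hM₂ : ∀ z' : ℝ, M₂ z' = r₂ z' / f z')
    (hK : ∀ z' : ℝ, K z' = s₂ z' / f z' - m z' * M₂ z')
    (ℓ₁ ℓ₂ Btil Dtil : ℝ)
    (hℓ₁ : ℓ₁ = (∫ q : ℝ × ℝ, p₁ (q.1, q.2, z)) / f z)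
    (hℓ₂ : ℓ₂ = (∫ q : ℝ × ℝ, p₂ (q.1, q.2, z)) / f z - ℓ₁ ^ 2)
    (hBtil : Btil = (∫ q : ℝ × ℝ, q.1 * q.2 ^ 2 * p₂ (q.1, q.2, z)) / f z)
    (hDtil : Dtil = (∫ q : ℝ × ℝ, q.2 ^ 2 * p₂ (q.1, q.2, z)) / f z) :
    (DifferentiableAt ℝ m z ∧ DifferentiableAt ℝ (deriv m) z) ∧
    (DifferentiableAt ℝ M₂ z ∧ DifferentiableAt ℝ (deriv M₂) z) ∧
    (DifferentiableAt ℝ K z ∧ DifferentiableAt ℝ (deriv K) z) ∧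
    Btil - Dtil * m z =
      (ℓ₂ + ℓ₁ ^ 2) * K z + 2 * ℓ₁ * (deriv K z + M₂ z * deriv m z) +
        deriv (deriv K) z + 2 * deriv M₂ z * deriv m z + M₂ z * deriv (deriv m) z := by
  have hfz : (0:ℝ) < f z := hfpos z hzU
  -- substitute defined quantities
  have hmE : m = fun t => w t / f t := funext hm
  subst hmE
  have hME : M₂ = fun t => r₂ t / f t := funext hM₂
  subst hME
  have hKE : K = fun t => s₂ t / f t - w t / f t * (r₂ t / f t) := funext hK
  subst hKE
  subst hℓ₁ hℓ₂ hBtil hDtil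
  -- quotient packages
  obtain ⟨Hw1, Hw2⟩ := quot_pkg (a' := fun t => ∫ q : ℝ × ℝ, p₁ (q.1, q.2, t))
    (b' := fun t => ∫ q : ℝ × ℝ, q.1 * p₁ (q.1, q.2, t)) hzU hfpos hf' hw' hf'' hw''
  obtain ⟨Hr1, Hr2⟩ := quot_pkg (a' := fun t => ∫ q : ℝ × ℝ, p₁ (q.1, q.2, t))
    (b' := fun t => ∫ q : ℝ × ℝ, q.2 ^ 2 * p₁ (q.1, q.2, t)) hzU hfpos hf' hr₂' hf'' hr₂''
  obtain ⟨Hs1, Hs2⟩ := quot_pkg (a' := fun t => ∫ q : ℝ × ℝ, p₁ (q.1, q.2, t))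
    (b' := fun t => ∫ q : ℝ × ℝ, q.1 * q.2 ^ 2 * p₁ (q.1, q.2, t)) hzU hfpos hf' hs₂' hf'' hs₂''
  have hUnhds : U ∈ nhds z := hU.mem_nhds hzU
  -- m
  have hm_ev : deriv (fun t => w t / f t) =ᶠ[nhds z]
      (fun x => ((∫ q : ℝ × ℝ, q.1 * p₁ (q.1, q.2, x)) * f x
        - w x * (∫ q : ℝ × ℝ, p₁ (q.1, q.2, x))) / (f x) ^ 2) := by
    filter_upwards [hUnhds] with x hx using (Hw1 x hx).deriv
  have hm2 := Hw2.congr_of_eventuallyEq hm_ev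
  have hm1z := (Hw1 z hzU).deriv
  -- M₂
  have hM_ev : deriv (fun t => r₂ t / f t) =ᶠ[nhds z]
      (fun x => ((∫ q : ℝ × ℝ, q.2 ^ 2 * p₁ (q.1, q.2, x)) * f x
        - r₂ x * (∫ q : ℝ × ℝ, p₁ (q.1, q.2, x))) / (f x) ^ 2) := by
    filter_upwards [hUnhds] with x hx using (Hr1 x hx).deriv
  have hM2 := Hr2.congr_of_eventuallyEq hM_ev
  have hM1z := (Hr1 z hzU).deriv
  -- K
  have HK1 : ∀ x ∈ U, HasDerivAt (fun t => s₂ t / f t - w t / f t * (r₂ t / f t))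
      (((∫ q : ℝ × ℝ, q.1 * q.2 ^ 2 * p₁ (q.1, q.2, x)) * f x
          - s₂ x * (∫ q : ℝ × ℝ, p₁ (q.1, q.2, x))) / (f x) ^ 2
        - (((∫ q : ℝ × ℝ, q.1 * p₁ (q.1, q.2, x)) * f x
            - w x * (∫ q : ℝ × ℝ, p₁ (q.1, q.2, x))) / (f x) ^ 2 * (r₂ x / f x)
          + w x / f x * (((∫ q : ℝ × ℝ, q.2 ^ 2 * p₁ (q.1, q.2, x)) * f x
            - r₂ x * (∫ q : ℝ × ℝ, p₁ (q.1, q.2, x))) / (f x) ^ 2))) x :=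
    fun x hx => (Hs1 x hx).sub ((Hw1 x hx).mul (Hr1 x hx))
  have HK2 := Hs2.sub ((Hw2.mul (Hr1 z hzU)).add ((Hw1 z hzU).mul Hr2))
  have hK_ev : deriv (fun t => s₂ t / f t - w t / f t * (r₂ t / f t)) =ᶠ[nhds z]
      (fun x => ((∫ q : ℝ × ℝ, q.1 * q.2 ^ 2 * p₁ (q.1, q.2, x)) * f x
          - s₂ x * (∫ q : ℝ × ℝ, p₁ (q.1, q.2, x))) / (f x) ^ 2
        - (((∫ q : ℝ × ℝ, q.1 * p₁ (q.1, q.2, x)) * f x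
            - w x * (∫ q : ℝ × ℝ, p₁ (q.1, q.2, x))) / (f x) ^ 2 * (r₂ x / f x)
          + w x / f x * (((∫ q : ℝ × ℝ, q.2 ^ 2 * p₁ (q.1, q.2, x)) * f x
            - r₂ x * (∫ q : ℝ × ℝ, p₁ (q.1, q.2, x))) / (f x) ^ 2))) := by
    filter_upwards [hUnhds] with x hx using (HK1 x hx).deriv
  have hK2 := HK2.congr_of_eventuallyEq hK_ev
  have hK1z := (HK1 z hzU).deriv
  refine ⟨⟨(Hw1 z hzU).differentiableAt, hm2.differentiableAt⟩,
    ⟨(Hr1 z hzU).differentiableAt, hM2.differentiableAt⟩,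
    ⟨(HK1 z hzU).differentiableAt, hK2.differentiableAt⟩, ?_⟩
  rw [hm1z, hM1z, hK1z, hm2.deriv, hK2.deriv]
  field_simp
  ring
end

section
/- Under the hypotheses of the preceding setting (first-order differentiation under the integral sign on a neighborhood U of z and second-order differentiation under the integral sign at z for all the numerators f, ∫∫x·p, ∫∫y·p, ∫∫y²·p, ∫∫x·y·p, ∫∫x·y²·p, with f > 0 on U), define Ã(z) = (∫∫ x·y·∂₃p(x,y,z) dx dy)/f(z), B̃(z) = (∫∫ x·y²·∂₃²p(x,y,z) dx dy)/f(z), C̃(z) = (∫∫ y·∂₃p(x,y,z) dx dy)/f(z), D̃(z) = (∫∫ y²·∂₃²p(x,y,z) dx dy)/f(z), L(z) := C̃(z)·m(z) − Ã(z), Ḡ := (∫∫ y·p(·,·,z') dx dy)/f, M₂ := (∫∫ y²·p(·,·,z') dx dy)/f, K := (∫∫ x·y²·p(·,·,z') dx dy)/f − m·M₂, ℓ₁ := f'(z)/f(z), ℓ₂ := f''(z)/f(z) − ℓ₁². Then B̃(z) − 2·Ã(z)·C̃(z) + (2·C̃(z)² − D̃(z))·m(z) = (ℓ₂ + ℓ₁²)·K(z)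 + 2·ℓ₁·(K'(z) + M₂(z)·m'(z)) + K''(z) + 2·M₂'(z)·m'(z) + M₂(z)·m''(z) + 2·(ℓ₁·Ḡ(z) + Ḡ'(z))·L(z). -/
open MeasureTheory

lemma quot_aux (U : Set ℝ) (hU : IsOpen U) (z : ℝ) (hz : z ∈ U)
    (f n If In : ℝ → ℝ) (F2 N2 : ℝ)
    (hfpos : ∀ z' ∈ U, 0 < f z')
    (hf' : ∀ z' ∈ U, HasDerivAt f (If z') z')
    (hn' : ∀ z' ∈ U, HasDerivAt n (In z') z')
    (hIf : HasDerivAt If F2 z)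
    (hIn : HasDerivAt In N2 z) :
    (∀ z' ∈ U, HasDerivAt (fun t => n t / f t)
        ((In z' * f z' - n z' * If z') / f z' ^ 2) z') ∧
    HasDerivAt (fun t => (In t * f t - n t * If t) / f t ^ 2)
      (((N2 * f z - n z * F2) * f z - 2 * If z * (In z * f z - n z * If z)) / f z ^ 3) z := by
  have hne : ∀ z' ∈ U, f z' ≠ 0 := fun z' h => (hfpos z' h).ne'
  constructor
  · intro z' h
    exact (hn' z' h).div (hf' z' h) (hne z' h)
  · have h1 : HasDerivAt (fun t => In t * f t - n t * If t)
        (N2 * f z + In z * If z - (In z * f z * 0 + (In z * If z + n z * F2))) z := by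
      exact ((hIn.mul (hf' z hz)).sub ((hn' z hz).mul hIf)).congr_deriv (by ring)
    have h2 : HasDerivAt (fun t => f t ^ 2) ((2 : ℕ) * f z ^ (2 - 1) * If z) z :=
      (hf' z hz).pow 2
    have h3 := h1.div h2 (pow_ne_zero 2 (hne z hz))
    refine h3.congr_deriv ?_
    have hfz := hne z hz
    field_simp
    ring

lemma deriv2_of_eventually (U : Set ℝ) (hU : IsOpen U) (z : ℝ) (hz : z ∈ U)
    (q g : ℝ → ℝ) (D : ℝ)
    (hq : ∀ t ∈ U, HasDerivAt q (g t) t)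
    (hg : HasDerivAt g D z) :
    deriv q z = g z ∧ deriv (deriv q) z = D := by
  refine ⟨(hq z hz).deriv, ?_⟩
  have ev : deriv q =ᶠ[nhds z] g := by
    filter_upwards [hU.mem_nhds hz] with x hx using (hq x hx).deriv
  rw [ev.deriv_eq, hg.deriv]

set_option maxHeartbeats 4000000 in
/-- Full covariance-form expression for the second-order correction coefficient
`Fᵢ(z,a) = B̃ − 2ÃC̃ + (2C̃² − D̃)m` of Proposition 1, under first-order differentiation
under the integral sign on a neighborhood `U` of `z` (for all six numerators) and
second-order differentiation under the integral sign at `z`. `p₁`, `p₂` are the first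
and second partial derivatives of `p` in its third argument; `m(z) = E[X|Z=z]`,
`Ḡ(z) = E[W|Z=z]`, `M₂(z) = E[W²|Z=z]`, `K(z) = Cov[X,W²|Z=z]`, `L = C̃·m − Ã`. -/
theorem second_order_correction_covariance_form (z : ℝ) (p p₁ p₂ : ℝ × ℝ × ℝ → ℝ)
    (hp : Measurable p) (hp_nonneg : ∀ q, 0 ≤ p q)
    (hp₁ : Measurable p₁) (hp₂ : Measurable p₂)
    (hderiv1 : ∀ x y s : ℝ, HasDerivAt (fun t => p (x, y, t)) (p₁ (x, y, s)) s)
    (hderiv2 : ∀ x y s : ℝ, HasDerivAt (fun t => p₁ (x, y, t)) (p₂ (x, y, s)) s)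
    (U : Set ℝ) (hU : IsOpen U) (hzU : z ∈ U)
    (f w r r₂ s s₂ : ℝ → ℝ)
    (hf : ∀ z' : ℝ, f z' = ∫ q : ℝ × ℝ, p (q.1, q.2, z'))
    (hw : ∀ z' : ℝ, w z' = ∫ q : ℝ × ℝ, q.1 * p (q.1, q.2, z'))
    (hr : ∀ z' : ℝ, r z' = ∫ q : ℝ × ℝ, q.2 * p (q.1, q.2, z'))
    (hr₂ : ∀ z' : ℝ, r₂ z' = ∫ q : ℝ × ℝ, q.2 ^ 2 * p (q.1, q.2, z'))
    (hs : ∀ z' : ℝ, s z' = ∫ q : ℝ × ℝ, q.1 * q.2 * p (q.1, q.2, z'))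
    (hs₂ : ∀ z' : ℝ, s₂ z' = ∫ q : ℝ × ℝ, q.1 * q.2 ^ 2 * p (q.1, q.2, z'))
    (hfpos : ∀ z' ∈ U, 0 < f z')
    -- first-order differentiation under the integral sign on U
    (hf' : ∀ z' ∈ U, HasDerivAt f (∫ q : ℝ × ℝ, p₁ (q.1, q.2, z')) z')
    (hw' : ∀ z' ∈ U, HasDerivAt w (∫ q : ℝ × ℝ, q.1 * p₁ (q.1, q.2, z')) z')
    (hr' : ∀ z' ∈ U, HasDerivAt r (∫ q : ℝ × ℝ, q.2 * p₁ (q.1, q.2, z')) z')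
    (hr₂' : ∀ z' ∈ U, HasDerivAt r₂ (∫ q : ℝ × ℝ, q.2 ^ 2 * p₁ (q.1, q.2, z')) z')
    (hs' : ∀ z' ∈ U, HasDerivAt s (∫ q : ℝ × ℝ, q.1 * q.2 * p₁ (q.1, q.2, z')) z')
    (hs₂' : ∀ z' ∈ U, HasDerivAt s₂ (∫ q : ℝ × ℝ, q.1 * q.2 ^ 2 * p₁ (q.1, q.2, z')) z')
    -- second-order differentiation under the integral sign at z
    (hf'' : HasDerivAt (fun z' => ∫ q : ℝ × ℝ, p₁ (q.1, q.2, z'))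
      (∫ q : ℝ × ℝ, p₂ (q.1, q.2, z)) z)
    (hw'' : HasDerivAt (fun z' => ∫ q : ℝ × ℝ, q.1 * p₁ (q.1, q.2, z'))
      (∫ q : ℝ × ℝ, q.1 * p₂ (q.1, q.2, z)) z)
    (hr'' : HasDerivAt (fun z' => ∫ q : ℝ × ℝ, q.2 * p₁ (q.1, q.2, z'))
      (∫ q : ℝ × ℝ, q.2 * p₂ (q.1, q.2, z)) z)
    (hr₂'' : HasDerivAt (fun z' => ∫ q : ℝ × ℝ, q.2 ^ 2 * p₁ (q.1, q.2, z'))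
      (∫ q : ℝ × ℝ, q.2 ^ 2 * p₂ (q.1, q.2, z)) z)
    (hs'' : HasDerivAt (fun z' => ∫ q : ℝ × ℝ, q.1 * q.2 * p₁ (q.1, q.2, z'))
      (∫ q : ℝ × ℝ, q.1 * q.2 * p₂ (q.1, q.2, z)) z)
    (hs₂'' : HasDerivAt (fun z' => ∫ q : ℝ × ℝ, q.1 * q.2 ^ 2 * p₁ (q.1, q.2, z'))
      (∫ q : ℝ × ℝ, q.1 * q.2 ^ 2 * p₂ (q.1, q.2, z)) z)
    (m G M₂ K : ℝ → ℝ)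
    (hm : ∀ z' : ℝ, m z' = w z' / f z')
    (hG : ∀ z' : ℝ, G z' = r z' / f z')
    (hM₂ : ∀ z' : ℝ, M₂ z' = r₂ z' / f z')
    (hK : ∀ z' : ℝ, K z' = s₂ z' / f z' - m z' * M₂ z')
    (ℓ₁ ℓ₂ Atil Btil Ctil Dtil L : ℝ)
    (hℓ₁ : ℓ₁ = (∫ q : ℝ × ℝ, p₁ (q.1, q.2, z)) / f z)
    (hℓ₂ : ℓ₂ = (∫ q : ℝ × ℝ, p₂ (q.1, q.2, z)) / f z - ℓ₁ ^ 2)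
    (hAtil : Atil = (∫ q : ℝ × ℝ, q.1 * q.2 * p₁ (q.1, q.2, z)) / f z)
    (hBtil : Btil = (∫ q : ℝ × ℝ, q.1 * q.2 ^ 2 * p₂ (q.1, q.2, z)) / f z)
    (hCtil : Ctil = (∫ q : ℝ × ℝ, q.2 * p₁ (q.1, q.2, z)) / f z)
    (hDtil : Dtil = (∫ q : ℝ × ℝ, q.2 ^ 2 * p₂ (q.1, q.2, z)) / f z)
    (hL : L = Ctil * m z - Atil) :
    Btil - 2 * Atil * Ctil + (2 * Ctil ^ 2 - Dtil) * m z =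
      (ℓ₂ + ℓ₁ ^ 2) * K z + 2 * ℓ₁ * (deriv K z + M₂ z * deriv m z) +
        deriv (deriv K) z + 2 * deriv M₂ z * deriv m z + M₂ z * deriv (deriv m) z +
        2 * (ℓ₁ * G z + deriv G z) * L := by
  classical
  set If : ℝ → ℝ := fun t => ∫ q : ℝ × ℝ, p₁ (q.1, q.2, t) with hIfdef
  set Iw : ℝ → ℝ := fun t => ∫ q : ℝ × ℝ, q.1 * p₁ (q.1, q.2, t) with hIwdef
  set Ir : ℝ → ℝ := fun t => ∫ q : ℝ × ℝ, q.2 * p₁ (q.1, q.2, t) with hIrdef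
  set Ir₂ : ℝ → ℝ := fun t => ∫ q : ℝ × ℝ, q.2 ^ 2 * p₁ (q.1, q.2, t) with hIr₂def
  set It : ℝ → ℝ := fun t => ∫ q : ℝ × ℝ, q.1 * q.2 ^ 2 * p₁ (q.1, q.2, t) with hItdef
  have hf'U : ∀ t ∈ U, HasDerivAt f (If t) t := hf'
  have hw'U : ∀ t ∈ U, HasDerivAt w (Iw t) t := hw'
  have hr'U : ∀ t ∈ U, HasDerivAt r (Ir t) t := hr'
  have hr₂'U : ∀ t ∈ U, HasDerivAt r₂ (Ir₂ t) t := hr₂'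
  have hs₂'U : ∀ t ∈ U, HasDerivAt s₂ (It t) t := hs₂'
  have hIf2 : HasDerivAt If (∫ q : ℝ × ℝ, p₂ (q.1, q.2, z)) z := hf''
  have hIw2 : HasDerivAt Iw (∫ q : ℝ × ℝ, q.1 * p₂ (q.1, q.2, z)) z := hw''
  have hIr2 : HasDerivAt Ir (∫ q : ℝ × ℝ, q.2 * p₂ (q.1, q.2, z)) z := hr''
  have hIr₂2 : HasDerivAt Ir₂ (∫ q : ℝ × ℝ, q.2 ^ 2 * p₂ (q.1, q.2, z)) z := hr₂''
  have hIt2 : HasDerivAt It (∫ q : ℝ × ℝ, q.1 * q.2 ^ 2 * p₂ (q.1, q.2, z)) z := hs₂''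
  have hfz : f z ≠ 0 := (hfpos z hzU).ne'
  obtain ⟨Hm1, Hm2⟩ := quot_aux U hU z hzU f w If Iw _ _ hfpos hf'U hw'U hIf2 hIw2
  obtain ⟨HG1, HG2⟩ := quot_aux U hU z hzU f r If Ir _ _ hfpos hf'U hr'U hIf2 hIr2
  obtain ⟨HM1, HM2⟩ := quot_aux U hU z hzU f r₂ If Ir₂ _ _ hfpos hf'U hr₂'U hIf2 hIr₂2
  obtain ⟨HT1, HT2⟩ := quot_aux U hU z hzU f s₂ If It _ _ hfpos hf'U hs₂'U hIf2 hIt2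
  have hmfun : m = fun t => w t / f t := funext hm
  have hGfun : G = fun t => r t / f t := funext hG
  have hMfun : M₂ = fun t => r₂ t / f t := funext hM₂
  have hKfun : K = fun t => s₂ t / f t - m t * M₂ t := funext hK
  have hm' : ∀ t ∈ U, HasDerivAt m ((Iw t * f t - w t * If t) / f t ^ 2) t := by
    rw [hmfun]; exact Hm1
  have hG' : ∀ t ∈ U, HasDerivAt G ((Ir t * f t - r t * If t) / f t ^ 2) t := by
    rw [hGfun]; exact HG1
  have hM' : ∀ t ∈ U, HasDerivAt M₂ ((Ir₂ t * f t - r₂ t * If t) / f t ^ 2) t := by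
    rw [hMfun]; exact HM1
  have Pm := deriv2_of_eventually U hU z hzU m
      (fun t => (Iw t * f t - w t * If t) / f t ^ 2) _ hm' Hm2
  have PG := deriv2_of_eventually U hU z hzU G
      (fun t => (Ir t * f t - r t * If t) / f t ^ 2) _ hG' HG2
  have PM := deriv2_of_eventually U hU z hzU M₂
      (fun t => (Ir₂ t * f t - r₂ t * If t) / f t ^ 2) _ hM' HM2
  have hK' : ∀ t ∈ U, HasDerivAt K
      ((It t * f t - s₂ t * If t) / f t ^ 2 -
        ((Iw t * f t - w t * If t) / f t ^ 2 * M₂ t +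
          m t * ((Ir₂ t * f t - r₂ t * If t) / f t ^ 2))) t := by
    rw [hKfun]
    intro t ht
    exact (HT1 t ht).sub ((hm' t ht).mul (hM' t ht))
  have DK := HT2.sub ((Hm2.mul (hM' z hzU)).add ((hm' z hzU).mul HM2))
  have PK := deriv2_of_eventually U hU z hzU K
      (fun t => (It t * f t - s₂ t * If t) / f t ^ 2 -
        ((Iw t * f t - w t * If t) / f t ^ 2 * M₂ t +
          m t * ((Ir₂ t * f t - r₂ t * If t) / f t ^ 2))) _ hK' DK
  simp only [hℓ₂, hℓ₁, hBtil, hAtil, hCtil, hDtil, hL, PK.2, PK.1, Pm.2, Pm.1, PM.1,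
    PG.1, hK, hm, hM₂, hG]
  field_simp
  ring
end

section
/- Let g : ℝ → ℝ be measurable and fix z ∈ ℝ. Suppose there is an open neighborhood U of z on which f > 0, where f(z') = ∫∫ p(x,y,z') dx dy, u(z') = ∫∫ x·g(y)·p(x,y,z') dx dy, v(z') = ∫∫ g(y)·p(x,y,z') dx dy, w(z') = ∫∫ x·p(x,y,z') dx dy. Assume first-order differentiation under the integral sign holds at every z' ∈ U (each of f, u, v, w has derivative at z' given by the corresponding integral of ∂₃p with the same weight) and second-order differentiation under the integral sign holds at z (each derivative function has derivative at z given by the corresponding integral of ∂₃²p with the same weight). Set H := u/f, G := v/f, m := w/f, f'(z) := ∫∫ ∂₃p(x,y,z) dx dy, f''(z) := ∫∫ ∂₃²p(x,y,z) dx dy, and define Q_{xg} := (∫∫ x·g(y)·∂₃²p(x,y,z) dx dy)/f(z) − 2·(f'(z)/f(z)²)·(∫∫ x·g(y)·∂₃p(x,y,z) dx dy) + (2·f'(z)²/f(z)³ − f''(z)/f(z)²)·u(z), and Q_g the analogous expression with weight g(y) in place of x·g(y) and v(z) in place of u(z). Then H − m·G is twice differentiable at z and its second derivative at z equals (Q_{xg}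 − m(z)·Q_g) − 2·G'(z)·m'(z) − G(z)·m''(z), where G', m', m'' denote the derivatives of G and m at z (which exist under the hypotheses). -/
set_option maxHeartbeats 2000000


open MeasureTheory

/-- Second identity of Property B.1: the second derivative of
`z' ↦ Cov[X, g(W) | Z=z'] = H − m·G` at `z` equals `(Q_{xg} − m·Q_g) − 2·G'·m' − G·m''`,
under first-order differentiation under the integral sign on a neighborhood `U` of `z`
and second-order differentiation under the integral sign at `z`. Here `p₁`, `p₂` are the
first and second partial derivatives of `p` in its third argument, `H = u/f`, `G = v/f`,
`m = w/f`. -/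
theorem property_B1_second_identity (g : ℝ → ℝ) (hg : Measurable g) (z : ℝ)
    (p p₁ p₂ : ℝ × ℝ × ℝ → ℝ)
    (hp : Measurable p) (hp_nonneg : ∀ q, 0 ≤ p q)
    (hp₁ : Measurable p₁) (hp₂ : Measurable p₂)
    (hderiv1 : ∀ x y s : ℝ, HasDerivAt (fun t => p (x, y, t)) (p₁ (x, y, s)) s)
    (hderiv2 : ∀ x y s : ℝ, HasDerivAt (fun t => p₁ (x, y, t)) (p₂ (x, y, s)) s)
    (U : Set ℝ) (hU : IsOpen U) (hzU : z ∈ U)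
    (f u v w : ℝ → ℝ)
    (hf : ∀ z' : ℝ, f z' = ∫ q : ℝ × ℝ, p (q.1, q.2, z'))
    (hu : ∀ z' : ℝ, u z' = ∫ q : ℝ × ℝ, q.1 * g q.2 * p (q.1, q.2, z'))
    (hv : ∀ z' : ℝ, v z' = ∫ q : ℝ × ℝ, g q.2 * p (q.1, q.2, z'))
    (hw : ∀ z' : ℝ, w z' = ∫ q : ℝ × ℝ, q.1 * p (q.1, q.2, z'))
    (hfpos : ∀ z' ∈ U, 0 < f z')
    -- first-order differentiation under the integral sign on U
    (hf' : ∀ z' ∈ U, HasDerivAt f (∫ q : ℝ × ℝ, p₁ (q.1, q.2, z')) z')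
    (hu' : ∀ z' ∈ U, HasDerivAt u (∫ q : ℝ × ℝ, q.1 * g q.2 * p₁ (q.1, q.2, z')) z')
    (hv' : ∀ z' ∈ U, HasDerivAt v (∫ q : ℝ × ℝ, g q.2 * p₁ (q.1, q.2, z')) z')
    (hw' : ∀ z' ∈ U, HasDerivAt w (∫ q : ℝ × ℝ, q.1 * p₁ (q.1, q.2, z')) z')
    -- second-order differentiation under the integral sign at z
    (hf'' : HasDerivAt (fun z' => ∫ q : ℝ × ℝ, p₁ (q.1, q.2, z'))
      (∫ q : ℝ × ℝ, p₂ (q.1, q.2, z)) z)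
    (hu'' : HasDerivAt (fun z' => ∫ q : ℝ × ℝ, q.1 * g q.2 * p₁ (q.1, q.2, z'))
      (∫ q : ℝ × ℝ, q.1 * g q.2 * p₂ (q.1, q.2, z)) z)
    (hv'' : HasDerivAt (fun z' => ∫ q : ℝ × ℝ, g q.2 * p₁ (q.1, q.2, z'))
      (∫ q : ℝ × ℝ, g q.2 * p₂ (q.1, q.2, z)) z)
    (hw'' : HasDerivAt (fun z' => ∫ q : ℝ × ℝ, q.1 * p₁ (q.1, q.2, z'))
      (∫ q : ℝ × ℝ, q.1 * p₂ (q.1, q.2, z)) z)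
    (f'z f''z Qxg Qg : ℝ)
    (hf'z : f'z = ∫ q : ℝ × ℝ, p₁ (q.1, q.2, z))
    (hf''z : f''z = ∫ q : ℝ × ℝ, p₂ (q.1, q.2, z))
    (hQxg : Qxg = (∫ q : ℝ × ℝ, q.1 * g q.2 * p₂ (q.1, q.2, z)) / f z -
        2 * (f'z / (f z) ^ 2) * (∫ q : ℝ × ℝ, q.1 * g q.2 * p₁ (q.1, q.2, z)) +
        (2 * f'z ^ 2 / (f z) ^ 3 - f''z / (f z) ^ 2) * u z)
    (hQg : Qg = (∫ q : ℝ × ℝ, g q.2 * p₂ (q.1, q.2, z)) / f z -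
        2 * (f'z / (f z) ^ 2) * (∫ q : ℝ × ℝ, g q.2 * p₁ (q.1, q.2, z)) +
        (2 * f'z ^ 2 / (f z) ^ 3 - f''z / (f z) ^ 2) * v z) :
    DifferentiableAt ℝ (fun z' => u z' / f z' - (w z' / f z') * (v z' / f z')) z ∧
    DifferentiableAt ℝ
      (deriv fun z' => u z' / f z' - (w z' / f z') * (v z' / f z')) z ∧
    deriv (deriv fun z' => u z' / f z' - (w z' / f z') * (v z' / f z')) z =
      (Qxg - (w z / f z) * Qg) -
        2 * deriv (fun z' => v z' / f z') z * deriv (fun z' => w z' / f z') z -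
        (v z / f z) * deriv (deriv fun z' => w z' / f z') z := by
  have hfne : ∀ z' ∈ U, f z' ≠ 0 := fun z' h => (hfpos z' h).ne'
  set F1 : ℝ → ℝ := fun z' => ∫ q : ℝ × ℝ, p₁ (q.1, q.2, z') with hF1
  set U1 : ℝ → ℝ := fun z' => ∫ q : ℝ × ℝ, q.1 * g q.2 * p₁ (q.1, q.2, z') with hU1
  set V1 : ℝ → ℝ := fun z' => ∫ q : ℝ × ℝ, g q.2 * p₁ (q.1, q.2, z') with hV1
  set W1 : ℝ → ℝ := fun z' => ∫ q : ℝ × ℝ, q.1 * p₁ (q.1, q.2, z') with hW1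
  have Du : ∀ z' ∈ U, HasDerivAt (fun t => u t / f t)
      ((U1 z' * f z' - u z' * F1 z') / f z' ^ 2) z' :=
    fun z' h => (hu' z' h).div (hf' z' h) (hfne z' h)
  have Dv : ∀ z' ∈ U, HasDerivAt (fun t => v t / f t)
      ((V1 z' * f z' - v z' * F1 z') / f z' ^ 2) z' :=
    fun z' h => (hv' z' h).div (hf' z' h) (hfne z' h)
  have Dw : ∀ z' ∈ U, HasDerivAt (fun t => w t / f t)
      ((W1 z' * f z' - w z' * F1 z') / f z' ^ 2) z' :=
    fun z' h => (hw' z' h).div (hf' z' h) (hfne z' h)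
  have Dphi : ∀ z' ∈ U, HasDerivAt (fun t => u t / f t - (w t / f t) * (v t / f t))
      ((U1 z' * f z' - u z' * F1 z') / f z' ^ 2 -
        ((W1 z' * f z' - w z' * F1 z') / f z' ^ 2 * (v z' / f z') +
          w z' / f z' * ((V1 z' * f z' - v z' * F1 z') / f z' ^ 2))) z' :=
    fun z' h => (Du z' h).sub ((Dw z' h).mul (Dv z' h))
  have hmem : U ∈ nhds z := hU.mem_nhds hzU
  -- second-derivative ingredients at z
  have h1 := ((hu''.mul (hf' z hzU)).sub ((hu' z hzU).mul hf'')).div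
    ((hf' z hzU).pow 2) (pow_ne_zero 2 (hfne z hzU))
  have h2 := ((hw''.mul (hf' z hzU)).sub ((hw' z hzU).mul hf'')).div
    ((hf' z hzU).pow 2) (pow_ne_zero 2 (hfne z hzU))
  have h3 := ((hv''.mul (hf' z hzU)).sub ((hv' z hzU).mul hf'')).div
    ((hf' z hzU).pow 2) (pow_ne_zero 2 (hfne z hzU))
  have hwf := Dw z hzU
  have hvf := Dv z hzU
  have hD := h1.sub ((h2.mul hvf).add (hwf.mul h3))
  have heq : (deriv fun z' => u z' / f z' - (w z' / f z') * (v z' / f z')) =ᶠ[nhds z]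
      fun z' => (U1 z' * f z' - u z' * F1 z') / f z' ^ 2 -
        ((W1 z' * f z' - w z' * F1 z') / f z' ^ 2 * (v z' / f z') +
          w z' / f z' * ((V1 z' * f z' - v z' * F1 z') / f z' ^ 2)) := by
    filter_upwards [hmem] with z' h
    exact (Dphi z' h).deriv
  have heqw : (deriv fun z' => w z' / f z') =ᶠ[nhds z]
      fun z' => (W1 z' * f z' - w z' * F1 z') / f z' ^ 2 := by
    filter_upwards [hmem] with z' h
    exact (Dw z' h).deriv
  refine ⟨(Dphi z hzU).differentiableAt, ?_, ?_⟩
  · exact (heq.differentiableAt_iff).mpr hD.differentiableAt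
  · erw [heq.deriv_eq, hD.deriv, heqw.deriv_eq, h2.deriv, hvf.deriv, hwf.deriv,
      hQxg, hQg, hf'z, hf''z]
    simp only [Pi.pow_apply, Pi.sub_apply, Pi.mul_apply, Pi.div_apply, Nat.cast_ofNat]
    have hfz : f z ≠ 0 := hfne z hzU
    set Fz := f z
    set Uz := u z
    set Vz := v z
    set Wz := w z
    set B1 := F1 z
    set A1 := U1 z
    set C1 := V1 z
    set D1 := W1 z
    set B2 := ∫ q : ℝ × ℝ, p₂ (q.1, q.2, z)
    set A2 := ∫ q : ℝ × ℝ, q.1 * g q.2 * p₂ (q.1, q.2, z)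
    set C2 := ∫ q : ℝ × ℝ, g q.2 * p₂ (q.1, q.2, z)
    set D2 := ∫ q : ℝ × ℝ, q.1 * p₂ (q.1, q.2, z)
    field_simp
    ring
end

section
/- Let Ω be a standard Borel space with a σ-algebra 𝓕 and a probability measure μ, let Z : Ω → ℝ be measurable, and let mZ ≤ 𝓕 be the sub-σ-algebra generated by Z. Let n ∈ ℕ and let ε : Fin n → Ω → ℝ be square-integrable random variables that are conditionally independent given mZ (iCondIndepFun) and conditionally centered: μ[ε i | mZ] = 0 μ-almost everywhere for every i. Let v : Fin n → ℝ → ℝ be measurable nonnegative functions such that μ[(ε i)² | mZ] = (v i) ∘ Z μ-almost everywhere for every i, and such that ∑ j, v j (Z ω) > 0 for every ω ∈ Ω. Define δ i := (fun ω => (v i (Z ω) / ∑ j, v j (Z ω)) · (∑ j, ε j ω)). Then for every i, μ[(δ i)² | mZ] = (fun ω => (v i (Z ω))² / ∑ j, v j (Z ω)) μ-almost everywhere. -/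
open MeasureTheory ProbabilityTheory

open Set in
/-- Key auxiliary lemma: the conditional expectation of a product of two conditionally
independent, square-integrable random variables factors; here with zero conditional means
it vanishes. -/
theorem condexp_mul_eq_zero_of_condIndepFun
    {Ω : Type*} [𝓕 : MeasurableSpace Ω] [StandardBorelSpace Ω]
    (μ : Measure Ω) [IsProbabilityMeasure μ]
    (mZ : MeasurableSpace Ω) (hle : mZ ≤ 𝓕)
    (f g : Ω → ℝ)
    (hf : MemLp f 2 μ) (hg : MemLp g 2 μ)
    (hindep : CondIndepFun mZ hle f g μ)
    (hcf : μ[f|mZ] =ᵐ[μ] 0) (hcg : μ[g|mZ] =ᵐ[μ] 0) :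
    μ[fun ω => f ω * g ω|mZ] =ᵐ[μ] 0 := by
  classical
  letI : MeasurableSpace Ω := 𝓕
  set κ := condExpKernel (mΩ := 𝓕) μ mZ with hκ
  -- measurable modifications
  have hfm := hf.aestronglyMeasurable
  have hgm := hg.aestronglyMeasurable
  set f' := hfm.mk f with hf'def
  set g' := hgm.mk g with hg'def
  have hf'sm : StronglyMeasurable f' := hfm.stronglyMeasurable_mk
  have hg'sm : StronglyMeasurable g' := hgm.stronglyMeasurable_mk
  have hff' : f =ᵐ[μ] f' := hfm.ae_eq_mk
  have hgg' : g =ᵐ[μ] g' := hgm.ae_eq_mk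
  -- a null measurable set containing the differences
  set N := toMeasurable μ ({ω | f ω ≠ f' ω} ∪ {ω | g ω ≠ g' ω}) with hNdef
  have hNmeas : MeasurableSet N := measurableSet_toMeasurable _ _
  have hNnull : μ N = 0 := by
    rw [hNdef, measure_toMeasurable]
    refine measure_union_null ?_ ?_
    · exact hff'
    · exact hgg'
  have hsubf : {ω | f ω ≠ f' ω} ⊆ N :=
    (Set.subset_union_left).trans (subset_toMeasurable _ _)
  have hsubg : {ω | g ω ≠ g' ω} ⊆ N :=
    (Set.subset_union_right).trans (subset_toMeasurable _ _)
  -- a.e. ω the kernel gives N measure zero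
  have hκN : ∀ᵐ ω ∂μ, κ ω N = 0 := by
    have h1 : (fun ω => (κ ω N).toReal) =ᵐ[μ] μ⟦N|mZ⟧ :=
      condExpKernel_ae_eq_condExp hle hNmeas
    have h2 : μ⟦N|mZ⟧ =ᵐ[μ] 0 := by
      have hind0 : N.indicator (fun _ => (1 : ℝ)) =ᵐ[μ] 0 := by
        have hae : ∀ᵐ ω ∂μ, ω ∉ N := by
          rw [ae_iff]
          simpa [not_not] using hNnull
        filter_upwards [hae] with ω hω
        simp [Set.indicator_of_notMem hω]
      exact (condExp_congr_ae hind0).trans (by rw [condExp_zero])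
    filter_upwards [h1.trans h2] with ω hω
    have hω' : (κ ω N).toReal = 0 := hω
    have hne : κ ω N ≠ ⊤ := by
      haveI : IsMarkovKernel κ := by rw [hκ]; infer_instance
      haveI : IsProbabilityMeasure (κ ω) := IsMarkovKernel.isProbabilityMeasure ω
      exact measure_ne_top _ _
    exact (ENNReal.toReal_eq_zero_iff _).1 hω' |>.resolve_right hne
  -- the a.e. factorization over the π-system of rational rays
  have hsets : ∀ q r : ℚ, ∀ᵐ ω ∂μ,
      κ ω (f ⁻¹' Iic (q : ℝ) ∩ g ⁻¹' Iic (r : ℝ))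
        = κ ω (f ⁻¹' Iic (q : ℝ)) * κ ω (g ⁻¹' Iic (r : ℝ)) := by
    intro q r
    have h2 := Kernel.IndepFun.meas_inter hindep
      (s := f ⁻¹' Iic (q : ℝ)) (t := g ⁻¹' Iic (r : ℝ))
      ⟨Iic (q : ℝ), measurableSet_Iic, rfl⟩ ⟨Iic (r : ℝ), measurableSet_Iic, rfl⟩
    exact ae_eq_of_ae_eq_trim (hm := hle) h2
  have hallsets : ∀ᵐ ω ∂μ, ∀ q r : ℚ,
      κ ω (f ⁻¹' Iic (q : ℝ) ∩ g ⁻¹' Iic (r : ℝ))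
        = κ ω (f ⁻¹' Iic (q : ℝ)) * κ ω (g ⁻¹' Iic (r : ℝ)) := by
    rw [ae_all_iff]; intro q; rw [ae_all_iff]; intro r; exact hsets q r
  -- a.e. pointwise independence under the kernel
  have hIndep : ∀ᵐ ω ∂μ, IndepFun f' g' (κ ω) := by
    filter_upwards [hallsets, hκN] with ω hω hNω
    haveI : IsMarkovKernel κ := by rw [hκ]; infer_instance
    haveI : IsProbabilityMeasure (κ ω) := IsMarkovKernel.isProbabilityMeasure ω
    have haeN : ∀ᵐ ω' ∂(κ ω), ω' ∉ N := by
      rw [ae_iff]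
      simpa [not_not] using hNω
    have hfae : ∀ᵐ ω' ∂(κ ω), f ω' = f' ω' := by
      filter_upwards [haeN] with ω' hω'
      by_contra h
      exact hω' (hsubf h)
    have hgae : ∀ᵐ ω' ∂(κ ω), g ω' = g' ω' := by
      filter_upwards [haeN] with ω' hω'
      by_contra h
      exact hω' (hsubg h)
    -- transferring measures of preimages between f and f'
    have key : ∀ s t : Set ℝ,
        κ ω (f' ⁻¹' s ∩ g' ⁻¹' t) = κ ω (f ⁻¹' s ∩ g ⁻¹' t) := by
      intro s t
      apply measure_congr
      filter_upwards [hfae, hgae] with ω' h1 h2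
      show (ω' ∈ f' ⁻¹' s ∩ g' ⁻¹' t) = (ω' ∈ f ⁻¹' s ∩ g ⁻¹' t)
      simp only [Set.mem_inter_iff, Set.mem_preimage, eq_iff_iff, h1, h2]
    have key1 : ∀ s : Set ℝ, κ ω (f' ⁻¹' s) = κ ω (f ⁻¹' s) := by
      intro s
      apply measure_congr
      filter_upwards [hfae] with ω' h1
      show (ω' ∈ f' ⁻¹' s) = (ω' ∈ f ⁻¹' s)
      simp only [Set.mem_preimage, eq_iff_iff, h1]
    have key2 : ∀ s : Set ℝ, κ ω (g' ⁻¹' s) = κ ω (g ⁻¹' s) := by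
      intro s
      apply measure_congr
      filter_upwards [hgae] with ω' h1
      show (ω' ∈ g' ⁻¹' s) = (ω' ∈ g ⁻¹' s)
      simp only [Set.mem_preimage, eq_iff_iff, h1]
    -- π-systems
    set p1 : Set (Set Ω) := (Set.preimage f') '' (⋃ q : ℚ, {Iic (q : ℝ)}) with hp1def
    set p2 : Set (Set Ω) := (Set.preimage g') '' (⋃ q : ℚ, {Iic (q : ℝ)}) with hp2def
    have hpi : ∀ (h : Ω → ℝ),
        IsPiSystem ((Set.preimage h) '' (⋃ q : ℚ, {Iic (q : ℝ)})) := by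
      intro h
      rintro _ ⟨s, hs, rfl⟩ _ ⟨t, ht, rfl⟩ -
      simp only [Set.mem_iUnion, Set.mem_singleton_iff] at hs ht
      obtain ⟨q, rfl⟩ := hs
      obtain ⟨r, rfl⟩ := ht
      refine ⟨Iic ((min q r : ℚ) : ℝ), Set.mem_iUnion.2 ⟨min q r, rfl⟩, ?_⟩
      rw [← Set.preimage_inter, Iic_inter_Iic, Rat.cast_min]
    have hgen : ∀ (h : Ω → ℝ),
        MeasurableSpace.comap h (inferInstance : MeasurableSpace ℝ)
          = MeasurableSpace.generateFrom
              ((Set.preimage h) '' (⋃ q : ℚ, {Iic (q : ℝ)})) := by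
      intro h
      conv_lhs => rw [BorelSpace.measurable_eq (α := ℝ), Real.borel_eq_generateFrom_Iic_rat]
      rw [MeasurableSpace.comap_generateFrom]
    have hyp : IndepSets p1 p2 (κ ω) := by
      rw [IndepSets_iff]
      rintro _ _ ⟨s, hs, rfl⟩ ⟨t, ht, rfl⟩
      simp only [Set.mem_iUnion, Set.mem_singleton_iff] at hs ht
      obtain ⟨q, rfl⟩ := hs
      obtain ⟨r, rfl⟩ := ht
      rw [key, key1, key2]
      exact hω q r
    exact IndepSets.indep (hf'sm.measurable.comap_le) (hg'sm.measurable.comap_le)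
      (hpi f') (hpi g') (hgen f') (hgen g') hyp
  -- integrability facts
  have hint_mul : Integrable (fun ω => f ω * g ω) μ := by
    have hpq : (1 : ENNReal)/1 = 1/2 + 1/2 := by
      rw [ENNReal.div_add_div_same, one_add_one_eq_two,
        ENNReal.div_self (by norm_num) ENNReal.ofNat_ne_top, div_one]
    haveI : ENNReal.HolderTriple 2 2 1 := ⟨by simpa [one_div] using hpq.symm⟩
    have h := (hg.smul (hf) (p := 2) (r := 1) : MemLp (f • g) 1 μ)
    have h' := memLp_one_iff_integrable.mp h
    exact h'
  have hint_f : Integrable f μ := hf.integrable one_le_two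
  have hint_g : Integrable g μ := hg.integrable one_le_two
  -- product of integrals under the kernel
  have hprod : ∀ᵐ ω ∂μ,
      ∫ y, f y * g y ∂(κ ω) = (∫ y, f y ∂(κ ω)) * ∫ y, g y ∂(κ ω) := by
    filter_upwards [hIndep, hκN] with ω hiω hNω
    haveI : IsMarkovKernel κ := by rw [hκ]; infer_instance
    haveI : IsProbabilityMeasure (κ ω) := IsMarkovKernel.isProbabilityMeasure ω
    have haeN : ∀ᵐ ω' ∂(κ ω), ω' ∉ N := by
      rw [ae_iff]
      simpa [not_not] using hNω
    have hfae : ∀ᵐ ω' ∂(κ ω), f ω' = f' ω' := by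
      filter_upwards [haeN] with ω' hω'
      by_contra h
      exact hω' (hsubf h)
    have hgae : ∀ᵐ ω' ∂(κ ω), g ω' = g' ω' := by
      filter_upwards [haeN] with ω' hω'
      by_contra h
      exact hω' (hsubg h)
    have e1 : ∫ y, f y * g y ∂(κ ω) = ∫ y, f' y * g' y ∂(κ ω) := by
      refine integral_congr_ae ?_
      filter_upwards [hfae, hgae] with ω' h1 h2
      rw [h1, h2]
    have e2 : ∫ y, f y ∂(κ ω) = ∫ y, f' y ∂(κ ω) := integral_congr_ae hfae
    have e3 : ∫ y, g y ∂(κ ω) = ∫ y, g' y ∂(κ ω) := integral_congr_ae hgae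
    rw [e1, e2, e3]
    exact hiω.integral_fun_mul_eq_mul_integral hf'sm.aestronglyMeasurable hg'sm.aestronglyMeasurable
  -- put everything together
  have h1 : μ[fun ω => f ω * g ω|mZ] =ᵐ[μ] fun ω => ∫ y, f y * g y ∂(κ ω) :=
    condExp_ae_eq_integral_condExpKernel hle hint_mul
  have h2 : μ[f|mZ] =ᵐ[μ] fun ω => ∫ y, f y ∂(κ ω) :=
    condExp_ae_eq_integral_condExpKernel hle hint_f
  have h3 : μ[g|mZ] =ᵐ[μ] fun ω => ∫ y, g y ∂(κ ω) :=
    condExp_ae_eq_integral_condExpKernel hle hint_g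
  have h2' : (fun ω => ∫ y, f y ∂(κ ω)) =ᵐ[μ] 0 := (h2.symm).trans hcf
  have h3' : (fun ω => ∫ y, g y ∂(κ ω)) =ᵐ[μ] 0 := (h3.symm).trans hcg
  filter_upwards [h1, hprod, h2', h3'] with ω e1 e2 e3 e4
  rw [e1, e2, e3, e4]
  simp

/-- Conditional second moment of the after-sharing contribution
`δᵢ = (vᵢ(Z)/∑ⱼ vⱼ(Z))·∑ⱼ εⱼ` given the index `Z`: it equals `vᵢ(Z)²/∑ⱼ vⱼ(Z)`, where
`vᵢ(Z)` is the conditional second moment (conditional variance) of the basis risk `εᵢ`. -/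
theorem condexp_sq_after_sharing
    {Ω : Type*} {𝓕 : MeasurableSpace Ω} [StandardBorelSpace Ω]
    (μ : Measure Ω) [IsProbabilityMeasure μ]
    (Z : Ω → ℝ) (hZ : Measurable Z)
    (mZ : MeasurableSpace Ω)
    (hmZ : mZ = MeasurableSpace.comap Z (borel ℝ))
    (hle : mZ ≤ 𝓕)
    (n : ℕ) (ε : Fin n → Ω → ℝ)
    (hε : ∀ i, MemLp (ε i) 2 μ)
    (hind : iCondIndepFun mZ hle ε μ)
    (hcent : ∀ i, μ[ε i|mZ] =ᵐ[μ] 0)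
    (v : Fin n → ℝ → ℝ)
    (hv : ∀ i, Measurable (v i)) (hv0 : ∀ i x, 0 ≤ v i x)
    (hvar : ∀ i, μ[fun ω => (ε i ω) ^ 2|mZ] =ᵐ[μ] fun ω => v i (Z ω))
    (hpos : ∀ ω, 0 < ∑ j, v j (Z ω))
    (δ : Fin n → Ω → ℝ)
    (hδ : ∀ i ω, δ i ω = (v i (Z ω) / ∑ j, v j (Z ω)) * ∑ j, ε j ω)
    (i : Fin n) :
    μ[fun ω => (δ i ω) ^ 2|mZ] =ᵐ[μ] fun ω => (v i (Z ω)) ^ 2 / ∑ j, v j (Z ω) := by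
  classical
  letI : MeasurableSpace Ω := 𝓕
  -- products are integrable
  have hmul : ∀ j k, Integrable (fun ω => ε j ω * ε k ω) μ := by
    intro j k
    have hpq : (1 : ENNReal)/1 = 1/2 + 1/2 := by
      rw [ENNReal.div_add_div_same, one_add_one_eq_two,
        ENNReal.div_self (by norm_num) ENNReal.ofNat_ne_top, div_one]
    haveI : ENNReal.HolderTriple 2 2 1 := ⟨by simpa [one_div] using hpq.symm⟩
    have h := ((hε k).smul (hε j) (p := 2) (r := 1) : MemLp ((ε j) • (ε k)) 1 μ)
    have h' := memLp_one_iff_integrable.mp h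
    exact h'
  -- cross terms vanish
  have hcross : ∀ j k, j ≠ k → μ[fun ω => ε j ω * ε k ω|mZ] =ᵐ[μ] 0 := by
    intro j k hjk
    exact condexp_mul_eq_zero_of_condIndepFun μ mZ hle (ε j) (ε k) (hε j) (hε k)
      (hind.condIndepFun hjk) (hcent j) (hcent k)
  -- conditional second moment of the pooled sum
  have hS2 : μ[fun ω => (∑ j, ε j ω) ^ 2|mZ] =ᵐ[μ] fun ω => ∑ j, v j (Z ω) := by
    have hexp : (fun ω => (∑ j, ε j ω) ^ 2)
        = ∑ p : Fin n × Fin n, fun ω => ε p.1 ω * ε p.2 ω := by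
      funext ω
      rw [Finset.sum_apply]
      rw [sq, Finset.sum_mul_sum]
      rw [← Finset.sum_product']
      rfl
    rw [hexp]
    have hsum := condExp_finsetSum (μ := μ) (m := mZ)
      (s := (Finset.univ : Finset (Fin n × Fin n)))
      (f := fun p => fun ω => ε p.1 ω * ε p.2 ω)
      (fun p _ => hmul p.1 p.2)
    refine hsum.trans ?_
    have hterm : ∀ p : Fin n × Fin n,
        μ[fun ω => ε p.1 ω * ε p.2 ω|mZ]
          =ᵐ[μ] fun ω => if p.1 = p.2 then v p.1 (Z ω) else 0 := by
      intro p
      by_cases hp : p.1 = p.2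
      · have : (fun ω => ε p.1 ω * ε p.2 ω) = fun ω => (ε p.1 ω) ^ 2 := by
          funext ω; rw [← hp, sq]
        have h2 : (fun ω => if p.1 = p.2 then v p.1 (Z ω) else 0)
            = fun ω => v p.1 (Z ω) := by
          funext ω; rw [if_pos hp]
        rw [this, h2]
        exact hvar p.1
      · have h2 : (fun ω => if p.1 = p.2 then v p.1 (Z ω) else 0)
            = fun _ => (0 : ℝ) := by
          funext ω; rw [if_neg hp]
        rw [h2]
        exact hcross p.1 p.2 hp
    have hall : ∀ᵐ ω ∂μ, ∀ p : Fin n × Fin n,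
        (μ[fun ω => ε p.1 ω * ε p.2 ω|mZ]) ω
          = if p.1 = p.2 then v p.1 (Z ω) else 0 := by
      rw [ae_all_iff]
      exact fun p => hterm p
    filter_upwards [hall] with ω hω
    rw [Finset.sum_apply]
    calc ∑ p : Fin n × Fin n, (μ[fun ω => ε p.1 ω * ε p.2 ω|mZ]) ω
        = ∑ p : Fin n × Fin n, if p.1 = p.2 then v p.1 (Z ω) else 0 := by
          exact Finset.sum_congr rfl fun p _ => hω p
      _ = ∑ j, v j (Z ω) := by
          rw [← Finset.univ_product_univ, Finset.sum_product]
          simp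
  -- the scaling factor is mZ-measurable and bounded by 1
  set c : Ω → ℝ := fun ω => (v i (Z ω) / ∑ j, v j (Z ω)) ^ 2 with hcdef
  have hZmZ : @Measurable Ω ℝ mZ (borel ℝ) Z := by
    intro s hs
    rw [hmZ]
    exact ⟨s, hs, rfl⟩
  have hCmeas : @Measurable ℝ ℝ (borel ℝ) _ (fun x => (v i x / ∑ j, v j x) ^ 2) := by
    rw [← BorelSpace.measurable_eq (α := ℝ)]
    exact (((hv i).div (Finset.measurable_sum _ fun j _ => hv j)).pow_const 2)
  have hcm : StronglyMeasurable[mZ] c := by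
    have : @Measurable Ω ℝ mZ _ c := by
      have h1 : @Measurable Ω ℝ mZ _ ((fun x => (v i x / ∑ j, v j x) ^ 2) ∘ Z) := by
        exact hCmeas.comp hZmZ
      exact h1
    exact this.stronglyMeasurable
  have hc01 : ∀ ω, 0 ≤ c ω ∧ c ω ≤ 1 := by
    intro ω
    have hs := hpos ω
    have hle1 : v i (Z ω) ≤ ∑ j, v j (Z ω) :=
      Finset.single_le_sum (fun j _ => hv0 j (Z ω)) (Finset.mem_univ i)
    have h0 : 0 ≤ v i (Z ω) / ∑ j, v j (Z ω) := div_nonneg (hv0 i (Z ω)) hs.le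
    have h1 : v i (Z ω) / ∑ j, v j (Z ω) ≤ 1 := (div_le_one hs).2 hle1
    constructor
    · positivity
    · calc (v i (Z ω) / ∑ j, v j (Z ω)) ^ 2 ≤ 1 ^ 2 := by
            exact pow_le_pow_left₀ h0 h1 2
        _ = 1 := one_pow 2
  -- integrability of the square of the sum and of the product
  have hSmem : MemLp (fun ω => ∑ j, ε j ω) 2 μ := by
    have := memLp_finset_sum' (μ := μ) (p := 2) Finset.univ (f := ε) fun j _ => hε j
    convert this using 1
    funext ω
    simp [Finset.sum_apply]
  have hS2int : Integrable (fun ω => (∑ j, ε j ω) ^ 2) μ := hSmem.integrable_sq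
  have hcS2int : Integrable (fun ω => c ω * (∑ j, ε j ω) ^ 2) μ := by
    refine Integrable.bdd_mul hS2int ((hcm.mono hle).aestronglyMeasurable) (c := 1) (Filter.Eventually.of_forall fun ω => ?_)
    rw [Real.norm_eq_abs, abs_of_nonneg (hc01 ω).1]
    exact (hc01 ω).2
  -- rewrite δ i ² as c * S²
  have hδ2 : (fun ω => (δ i ω) ^ 2) = fun ω => c ω * (∑ j, ε j ω) ^ 2 := by
    funext ω
    rw [hδ i ω, mul_pow, hcdef]
  -- pull out the mZ-measurable factor
  have hpull : μ[fun ω => c ω * (∑ j, ε j ω) ^ 2|mZ]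
      =ᵐ[μ] fun ω => c ω * (μ[fun ω => (∑ j, ε j ω) ^ 2|mZ]) ω := by
    have := condExp_mul_of_stronglyMeasurable_left (μ := μ) hcm
      (g := fun ω => (∑ j, ε j ω) ^ 2) hcS2int hS2int
    filter_upwards [this] with ω hω
    exact hω
  rw [hδ2]
  refine hpull.trans ?_
  filter_upwards [hS2] with ω hω
  rw [hω]
  have hs : (∑ j, v j (Z ω)) ≠ 0 := (hpos ω).ne'
  rw [hcdef]
  field_simp
end
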